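/- arXiv:2103.12470 — 3 statements merged into one kernel-verified Lean document; each statement's English description precedes it below -/
import Mathlib

section
/- Fix L > 0 and let 0 < k < 2π/L. Define G^{0,k} : ℝ³ → ℂ by G^{0,k}(x) = e^{i k |x₃|}/(2 i k L²) − Σ_{q ∈ Λ*\{0}} e^{i q·(x₁,x₂)} e^{−√(|q|²−k²)|x₃|}/(2L²√(|q|²−k²)), where Λ* = {(2π/L)q : q ∈ ℤ²} and the sum is a tsum over ℤ² \ {0}. Then for every x ∈ ℝ³ with x₃ ≠ 0, the complex conjugate satisfies conj(G^{0,k}(x)) = G^{0,k}(x) − cos(k|x₃|)/(i k L²). -/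
/-!
Complex conjugation sends the evanescent mode of `q` to that of `-q`, and `q ↦ -q` permutes
`ℤ² \ {0}`, so the evanescent series is real. Only the propagating term `e^{ik|x₃|}/(2ikL²)`
changes, by `-cos(k|x₃|)/(ikL²)`.
-/

open MeasureTheory

noncomputable section

abbrev R2 : Type := EuclideanSpace ℝ (Fin 2)
abbrev R3 : Type := EuclideanSpace ℝ (Fin 3)

/-- The dual lattice vector `(2π/L) q` for `q ∈ ℤ²`. -/
def dualVec (L : ℝ) (q : ℤ × ℤ) : R2 :=
  (2 * Real.pi / L) • (EuclideanSpace.equiv (Fin 2) ℝ).symm ![(q.1 : ℝ), (q.2 : ℝ)]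

/-- The evanescent mode associated to `q ∈ Λ* \ {0}`. -/
def evanescent (L : ℝ) (α : R2) (k : ℝ) (q : ℤ × ℤ) (x : R3) : ℂ :=
  Complex.exp (Complex.I * (((α + dualVec L q) 0 * x 0 + (α + dualVec L q) 1 * x 1 : ℝ) : ℂ)) *
    Complex.exp ((-(Real.sqrt (‖α + dualVec L q‖ ^ 2 - k ^ 2) * |x 2|) : ℝ) : ℂ) /
      ((2 * L ^ 2 * Real.sqrt (‖α + dualVec L q‖ ^ 2 - k ^ 2) : ℝ) : ℂ)

/-- `k₃ = √(k² − |α|²)`. -/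
def kthree (α : R2) (k : ℝ) : ℝ := Real.sqrt (k ^ 2 - ‖α‖ ^ 2)

/-- The quasiperiodic Green's function `G^{α,k}`, via its spectral representation. -/
def Gf (L : ℝ) (α : R2) (k : ℝ) (x : R3) : ℂ :=
  Complex.exp (Complex.I * ((α 0 * x 0 + α 1 * x 1 : ℝ) : ℂ)) *
      Complex.exp (Complex.I * ((kthree α k * |x 2| : ℝ) : ℂ)) /
      (2 * Complex.I * ((kthree α k : ℝ) : ℂ) * ((L : ℝ) : ℂ) ^ 2) -
    ∑' q : {q : ℤ × ℤ // q ≠ 0}, evanescent L α k q.1 x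

lemma dualVec_neg (L : ℝ) (q : ℤ × ℤ) : dualVec L (-q) = -dualVec L q := by
  ext i
  fin_cases i <;> simp [dualVec]

lemma conj_evanescent (L : ℝ) (α : R2) (k : ℝ) (q : ℤ × ℤ) (x : R3) :
    (starRingEnd ℂ) (evanescent L α k q x) = evanescent L (-α) k (-q) x := by
  have hfreq : -α + dualVec L (-q) = -(α + dualVec L q) := by rw [dualVec_neg, neg_add]
  simp only [evanescent, hfreq, norm_neg, map_div₀, map_mul, ← Complex.exp_conj,
    Complex.conj_I, Complex.conj_ofReal, PiLp.neg_apply]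
  push_cast
  ring_nf

lemma tsum_ne_zero_comp_neg {G E : Type*} [AddGroup G] [AddCommMonoid E] [TopologicalSpace E]
    (f : G → E) : ∑' q : {q : G // q ≠ 0}, f (-q.1) = ∑' q : {q : G // q ≠ 0}, f q.1 :=
  ((Equiv.neg G).subtypeEquiv fun _ => neg_ne_zero.symm).tsum_eq fun q => f q.1

lemma kthree_zero {k : ℝ} (hk : 0 ≤ k) : kthree 0 k = k := by
  simp [kthree, Real.sqrt_sq hk]

-- `exp(it) - 2 cos t = -exp(-it)`, and conjugation flips the sign of `i` in both places.
lemma conj_exp_div_two_I_mul (t c : ℝ) :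
    (starRingEnd ℂ) (Complex.exp (Complex.I * t) / (2 * Complex.I * c)) =
      Complex.exp (Complex.I * t) / (2 * Complex.I * c) - (Real.cos t : ℂ) / (Complex.I * c) := by
  rw [map_div₀, ← Complex.exp_conj, Complex.ofReal_cos, Complex.cos]
  simp only [map_mul, map_ofNat, Complex.conj_I, Complex.conj_ofReal]
  rcases eq_or_ne (c : ℂ) 0 with hc | hc
  · simp [hc]
  · field_simp
    ring_nf

theorem conj_Gzerok_general (L : ℝ) (k : ℝ) (hk : 0 < k)
    (x : R3) :
    (starRingEnd ℂ) (Gf L 0 k x) =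
      Gf L 0 k x - ((Real.cos (k * |x 2|) : ℝ) : ℂ) / (Complex.I * (k : ℂ) * ((L : ℝ) : ℂ) ^ 2) := by
  have hsum : (starRingEnd ℂ) (∑' q : {q : ℤ × ℤ // q ≠ 0}, evanescent L 0 k q.1 x) =
      ∑' q : {q : ℤ × ℤ // q ≠ 0}, evanescent L 0 k q.1 x := by
    simp only [Complex.conj_tsum, conj_evanescent, neg_zero]
    exact tsum_ne_zero_comp_neg fun q => evanescent L 0 k q x
  have hprop := conj_exp_div_two_I_mul (k * |x 2|) (k * L ^ 2)
  rw [Complex.ofReal_mul k (L ^ 2), Complex.ofReal_pow, ← mul_assoc, ← mul_assoc] at hprop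
  simp only [Gf, kthree_zero hk.le, map_sub, hsum, PiLp.zero_apply, zero_mul, add_zero,
    Complex.ofReal_zero, mul_zero, Complex.exp_zero, one_mul]
  rw [sub_right_comm, hprop]

/-- For `0 < k < 2π/L`, the quasiperiodic Green's function `G^{0,k}` at quasiperiodicity
`α = 0` satisfies `conj(G^{0,k}(x)) = G^{0,k}(x) − cos(k|x₃|)/(i k L²)` for `x₃ ≠ 0`. -/
theorem conj_Gzerok (L : ℝ) (hL : 0 < L) (k : ℝ) (hk : 0 < k) (hk2 : k < 2 * Real.pi / L)
    (x : R3) (hx : x 2 ≠ 0) :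
    (starRingEnd ℂ) (Gf L 0 k x) =
      Gf L 0 k x - ((Real.cos (k * |x 2|) : ℝ) : ℂ) / (Complex.I * (k : ℂ) * ((L : ℝ) : ℂ) ^ 2) :=
  conj_Gzerok_general L k hk x
end
end

section
/- Fix L > 0, let Λ* = {(2π/L)q : q ∈ ℤ²}, let α ∈ ℝ² and k > 0 satisfy |α| < k < |α + q| for every q ∈ Λ* \ {0}, set k₃ = √(k² − |α|²), k₊ = (α₁, α₂, k₃), k₋ = (α₁, α₂, −k₃), and let G^{α,k} be the quasiperiodic Green's function defined by its spectral representation. Let D ⊂ ℝ³ be a bounded set, let μ be the 2-dimensional Hausdorff measure on ℝ³ restricted to the topological boundary ∂D, choose R > 0 with ∂D ⊆ {y : |y₃| ≤ R}, and let φ : ℝ³ → ℂ be μ-integrable. Then there exist constants C > 0 and c > 0 such that: for every x with x₃ ≥ R + 1, |∫_{∂D} G^{α,k}(x−y) φ(y) dμ(y) − (e^{i k₊·x}/(2 i k₃ L²)) ∫_{∂D} e^{−i k₊·y} φ(y) dμ(y)| ≤ C e^{−c x₃}; and for every x with x₃ ≤ −(R + 1), |∫_{∂D} G^{α,k}(x−y)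 φ(y) dμ(y) − (e^{i k₋·x}/(2 i k₃ L²)) ∫_{∂D} e^{−i k₋·y} φ(y) dμ(y)| ≤ C e^{c x₃}. -/
open MeasureTheory

noncomputable section

/-- `k₊·x` (sign `+1`) and `k₋·x` (sign `−1`) where `k₊ = (α₁,α₂,k₃)`, `k₋ = (α₁,α₂,−k₃)`. -/
def kdot (α : R2) (k : ℝ) (s : ℝ) (x : R3) : ℝ :=
  α 0 * x 0 + α 1 * x 1 + s * kthree α k * x 2

/-! Beyond the slab `|y₃| ≤ R` containing `∂D`, the propagating term of `G^{α,k}(x − y)`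
factors as `e^{i k_± · x} e^{−i k_± · y}` and yields the plane wave exactly. What remains is
the evanescent series, whose `q`-th mode decays like `e^{−β_q |x₃ − y₃|}` with
`β_q = √(|α + q|² − k²)`. Since `β_q` grows linearly in `|q|`, the series `∑ e^{−β_q}`
converges, so `β_q → ∞` along the cofinite filter and the rates have a positive minimum `c`
over `q ≠ 0`. Hence the evanescent series is `O(e^{−c |x₃ − y₃|})` uniformly for
`|x₃ − y₃| ≥ 1`, and integrating it against `φ` gives the exponentially small error. -/

def decayRate (L : ℝ) (α : R2) (k : ℝ) (q : ℤ × ℤ) : ℝ :=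
  Real.sqrt (‖α + dualVec L q‖ ^ 2 - k ^ 2)

lemma norm_evanescent (L : ℝ) (α : R2) (k : ℝ) (q : ℤ × ℤ) (z : R3) :
    ‖evanescent L α k q z‖ =
      Real.exp (-(decayRate L α k q * |z 2|)) / (2 * L ^ 2 * decayRate L α k q) := by
  rw [evanescent, norm_div, norm_mul, Complex.norm_exp_I_mul_ofReal, Complex.norm_exp_ofReal,
    Complex.norm_real, one_mul, Real.norm_of_nonneg (by positivity), decayRate]

lemma continuous_evanescent (L : ℝ) (α : R2) (k : ℝ) (q : ℤ × ℤ) :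
    Continuous (evanescent L α k q) := by
  unfold evanescent
  fun_prop

lemma norm_dualVec {L : ℝ} (hL : 0 < L) (q : ℤ × ℤ) :
    ‖dualVec L q‖ = 2 * Real.pi / L * Real.sqrt ((q.1 : ℝ) ^ 2 + (q.2 : ℝ) ^ 2) := by
  rw [dualVec, norm_smul, Real.norm_of_nonneg (by positivity), EuclideanSpace.norm_eq]
  simp [Fin.sum_univ_two]

lemma sub_le_sqrt_sq_sub_sq {a k : ℝ} (hk : 0 ≤ k) : a - k ≤ Real.sqrt (a ^ 2 - k ^ 2) := by
  rcases le_total a k with hak | hka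
  · exact (sub_nonpos.2 hak).trans (Real.sqrt_nonneg _)
  · exact Real.le_sqrt_of_sq_le (by nlinarith)

lemma le_decayRate {L : ℝ} (hL : 0 < L) (α : R2) {k : ℝ} (hk : 0 ≤ k) (q : ℤ × ℤ) :
    Real.pi / L * (|(q.1 : ℝ)| + |(q.2 : ℝ)|) - (‖α‖ + k) ≤ decayRate L α k q := by
  have hq₁ : |(q.1 : ℝ)| ≤ Real.sqrt ((q.1 : ℝ) ^ 2 + (q.2 : ℝ) ^ 2) :=
    Real.abs_le_sqrt (by nlinarith)
  have hq₂ : |(q.2 : ℝ)| ≤ Real.sqrt ((q.1 : ℝ) ^ 2 + (q.2 : ℝ) ^ 2) :=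
    Real.abs_le_sqrt (by nlinarith)
  have hq : Real.pi / L * (|(q.1 : ℝ)| + |(q.2 : ℝ)|) ≤ ‖dualVec L q‖ := by
    rw [norm_dualVec hL, mul_div_assoc, mul_comm 2, mul_assoc]
    gcongr
    linarith
  have htri : ‖dualVec L q‖ - ‖α‖ ≤ ‖α + dualVec L q‖ := by
    have := norm_sub_norm_le (dualVec L q) (-α)
    rwa [norm_neg, sub_neg_eq_add, add_comm] at this
  have := sub_le_sqrt_sq_sub_sq (a := ‖α + dualVec L q‖) hk
  rw [decayRate]
  linarith

lemma summable_exp_neg_mul_abs_int {a : ℝ} (ha : 0 < a) :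
    Summable fun n : ℤ => Real.exp (-(a * |(n : ℝ)|)) := by
  have h := Real.summable_exp_nat_mul_iff.2 (neg_neg_of_pos ha)
  apply Summable.of_nat_of_neg <;> refine h.congr fun n => ?_ <;> simp [mul_comm]

lemma summable_exp_neg_decayRate {L : ℝ} (hL : 0 < L) (α : R2) {k : ℝ} (hk : 0 ≤ k) :
    Summable fun q : ℤ × ℤ => Real.exp (-decayRate L α k q) := by
  have hπL : 0 < Real.pi / L := by positivity
  have hprod := (summable_exp_neg_mul_abs_int hπL).mul_of_nonneg
    (summable_exp_neg_mul_abs_int hπL) (fun _ => (Real.exp_pos _).le)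
    (fun _ => (Real.exp_pos _).le)
  refine Summable.of_nonneg_of_le (fun _ => (Real.exp_pos _).le) (fun q => ?_)
    (hprod.mul_left (Real.exp (‖α‖ + k)))
  simp only [← Real.exp_add]
  exact Real.exp_le_exp.2 (by linarith [le_decayRate hL α hk q])

lemma decayRate_pos {L : ℝ} {α : R2} {k : ℝ} (hk : 0 ≤ k) {q : ℤ × ℤ}
    (hq : k < ‖α + dualVec L q‖) : 0 < decayRate L α k q :=
  Real.sqrt_pos.2 (by nlinarith)

lemma exists_pos_le_decayRate {L : ℝ} (hL : 0 < L) {α : R2} {k : ℝ} (hk : 0 ≤ k)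
    (hα : ∀ q : ℤ × ℤ, q ≠ 0 → k < ‖α + dualVec L q‖) :
    ∃ c > 0, ∀ q : ℤ × ℤ, q ≠ 0 → c ≤ decayRate L α k q := by
  have htop : Filter.Tendsto (decayRate L α k) Filter.cofinite Filter.atTop := by
    have := (summable_exp_neg_decayRate hL α hk).tendsto_cofinite_zero
    rw [Real.tendsto_exp_comp_nhds_zero] at this
    exact Filter.tendsto_neg_atBot_iff.1 this
  obtain ⟨q₀, hq₀, hmin⟩ := htop.exists_within_forall_le (s := {q | q ≠ 0}) ⟨(1, 0), by simp⟩
  exact ⟨_, decayRate_pos hk (hα q₀ hq₀), hmin⟩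

def evanescentTail (L : ℝ) (α : R2) (k : ℝ) (x : R3) : ℂ :=
  ∑' q : {q : ℤ × ℤ // q ≠ 0}, evanescent L α k q.1 x

lemma norm_evanescent_le {L : ℝ} (hL : 0 < L) {α : R2} {k c : ℝ} {q : ℤ × ℤ} (hc : 0 < c)
    (hcq : c ≤ decayRate L α k q) {z : R3} (hz : 1 ≤ |z 2|) :
    ‖evanescent L α k q z‖ ≤
      Real.exp (-decayRate L α k q) / (2 * L ^ 2 * c) * Real.exp (-(c * (|z 2| - 1))) := by
  rw [norm_evanescent, div_mul_eq_mul_div, ← Real.exp_add]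
  gcongr
  nlinarith

theorem evanescentTail_decay {L : ℝ} (hL : 0 < L) {α : R2} {k : ℝ} (hk : 0 ≤ k)
    (hα : ∀ q : ℤ × ℤ, q ≠ 0 → k < ‖α + dualVec L q‖) :
    ∃ c > 0, ∃ K ≥ 0, ContinuousOn (evanescentTail L α k) {z | 1 ≤ |z 2|} ∧
      ∀ z : R3, 1 ≤ |z 2| → ‖evanescentTail L α k z‖ ≤ K * Real.exp (-(c * |z 2|)) := by
  obtain ⟨c, hc, hcβ⟩ := exists_pos_le_decayRate hL hk hα
  set u : {q : ℤ × ℤ // q ≠ 0} → ℝ := fun q => Real.exp (-decayRate L α k q) / (2 * L ^ 2 * c)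
  have hu : Summable u := ((summable_exp_neg_decayRate hL α hk).subtype _).div_const _
  have hle (q : {q : ℤ × ℤ // q ≠ 0}) (z : R3) (hz : 1 ≤ |z 2|) :
      ‖evanescent L α k q z‖ ≤ u q * Real.exp (-(c * (|z 2| - 1))) :=
    norm_evanescent_le hL hc (hcβ q q.2) hz
  refine ⟨c, hc, (∑' q, u q) * Real.exp c, by positivity, ?_, fun z hz => ?_⟩
  · refine continuousOn_tsum (fun q => (continuous_evanescent L α k q).continuousOn) hu
      fun q z hz => (hle q z hz).trans (mul_le_of_le_one_right (by positivity) ?_)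
    exact Real.exp_le_one_iff.2 (by nlinarith [show (1 : ℝ) ≤ |z 2| from hz])
  · calc ‖evanescentTail L α k z‖ ≤ (∑' q, u q) * Real.exp (-(c * (|z 2| - 1))) :=
          tsum_of_norm_bounded (hu.hasSum.mul_right _) fun q => hle q z hz
      _ = (∑' q, u q) * Real.exp c * Real.exp (-(c * |z 2|)) := by
          rw [mul_assoc, ← Real.exp_add]; ring_nf

lemma norm_integral_mul_le_of_norm_le {X 𝕜 : Type*} [MeasurableSpace X] [RCLike 𝕜]
    {μ : Measure X} {f g : X → 𝕜} {B : ℝ} (hg : Integrable g μ) (hfB : ∀ᵐ x ∂μ, ‖f x‖ ≤ B) :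
    ‖∫ x, f x * g x ∂μ‖ ≤ B * ∫ x, ‖g x‖ ∂μ := by
  rw [← integral_const_mul]
  refine norm_integral_le_of_norm_le (hg.norm.const_mul B) ?_
  filter_upwards [hfB] with x hx
  rw [norm_mul]
  exact mul_le_mul_of_nonneg_right hx (norm_nonneg _)

lemma Gf_sub_eq {L : ℝ} {α : R2} {k s : ℝ} {x y : R3} (hs : |x 2 - y 2| = s * (x 2 - y 2)) :
    Gf L α k (x - y) =
      Complex.exp (Complex.I * ((kdot α k s x : ℝ) : ℂ)) /
          (2 * Complex.I * ((kthree α k : ℝ) : ℂ) * ((L : ℝ) : ℂ) ^ 2) *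
        Complex.exp (-(Complex.I * ((kdot α k s y : ℝ) : ℂ))) - evanescentTail L α k (x - y) := by
  simp only [Gf, evanescentTail, PiLp.sub_apply, hs]
  rw [div_mul_eq_mul_div, ← Complex.exp_add, ← Complex.exp_add]
  congr 3
  push_cast [kdot]
  ring

lemma norm_exp_neg_I_mul_ofReal (r : ℝ) : ‖Complex.exp (-(Complex.I * (r : ℂ)))‖ = 1 := by
  rw [← mul_neg, ← Complex.ofReal_neg, Complex.norm_exp_I_mul_ofReal]

theorem norm_singleLayer_sub_planeWave_le {L : ℝ} {α : R2} {k c K : ℝ} (hc : 0 ≤ c) (hK : 0 ≤ K)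
    (hcont : ContinuousOn (evanescentTail L α k) {z | 1 ≤ |z 2|})
    (hdecay : ∀ z : R3, 1 ≤ |z 2| → ‖evanescentTail L α k z‖ ≤ K * Real.exp (-(c * |z 2|)))
    {μ : Measure R3} {S : Set R3} (hS : MeasurableSet S) {R : ℝ} (hSR : S ⊆ {y | |y 2| ≤ R})
    {φ : R3 → ℂ} (hφ : Integrable φ (μ.restrict S)) {s : ℝ} (hs : |s| = 1) {x : R3}
    (hx : R + 1 ≤ s * x 2) :
    ‖(∫ y, Gf L α k (x - y) * φ y ∂μ.restrict S) -
        Complex.exp (Complex.I * ((kdot α k s x : ℝ) : ℂ)) /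
          (2 * Complex.I * ((kthree α k : ℝ) : ℂ) * ((L : ℝ) : ℂ) ^ 2) *
        ∫ y, Complex.exp (-(Complex.I * ((kdot α k s y : ℝ) : ℂ))) * φ y ∂μ.restrict S‖ ≤
      K * Real.exp (c * R) * (∫ y, ‖φ y‖ ∂μ.restrict S) * Real.exp (-(c * (s * x 2))) := by
  have hsep (y : R3) (hy : y ∈ S) :
      |x 2 - y 2| = s * (x 2 - y 2) ∧ s * x 2 - R ≤ |x 2 - y 2| := by
    have hsy : s * y 2 ≤ R := (le_abs_self _).trans (by rw [abs_mul, hs, one_mul]; exact hSR hy)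
    have hpos : 0 < s * (x 2 - y 2) := by rw [mul_sub]; linarith
    have habs : |x 2 - y 2| = s * (x 2 - y 2) := by
      rw [← abs_of_pos hpos, abs_mul, hs, one_mul]
    exact ⟨habs, by rw [habs, mul_sub]; linarith⟩
  have hfar (y : R3) (hy : y ∈ S) : 1 ≤ |(x - y) 2| := by
    rw [PiLp.sub_apply]; linarith [(hsep y hy).2]
  have htail_le (y : R3) (hy : y ∈ S) :
      ‖evanescentTail L α k (x - y)‖ ≤ K * Real.exp (c * R) * Real.exp (-(c * (s * x 2))) :=
    calc ‖evanescentTail L α k (x - y)‖ ≤ K * Real.exp (-(c * |(x - y) 2|)) :=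
          hdecay _ (hfar y hy)
      _ ≤ K * Real.exp (-(c * (s * x 2 - R))) := by
          rw [PiLp.sub_apply]; gcongr; exact (hsep y hy).2
      _ = K * Real.exp (c * R) * Real.exp (-(c * (s * x 2))) := by
          rw [mul_assoc, ← Real.exp_add]; ring_nf
  have htail_le_ae : ∀ᵐ y ∂μ.restrict S, ‖evanescentTail L α k (x - y)‖ ≤
      K * Real.exp (c * R) * Real.exp (-(c * (s * x 2))) :=
    (ae_restrict_iff' hS).2 (Filter.Eventually.of_forall htail_le)
  have hwave : Integrable (fun y => Complex.exp (-(Complex.I * ((kdot α k s y : ℝ) : ℂ))) * φ y)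
      (μ.restrict S) :=
    hφ.bdd_mul (c := 1) (by unfold kdot; fun_prop)
      (Filter.Eventually.of_forall fun y => (norm_exp_neg_I_mul_ofReal _).le)
  have htail : Integrable (fun y => evanescentTail L α k (x - y) * φ y) (μ.restrict S) :=
    hφ.bdd_mul ((hcont.comp (continuous_const.sub continuous_id).continuousOn
      hfar).aestronglyMeasurable hS) htail_le_ae
  have hsplit : (fun y => Gf L α k (x - y) * φ y) =ᵐ[μ.restrict S] fun y =>
      Complex.exp (Complex.I * ((kdot α k s x : ℝ) : ℂ)) /
          (2 * Complex.I * ((kthree α k : ℝ) : ℂ) * ((L : ℝ) : ℂ) ^ 2) *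
        (Complex.exp (-(Complex.I * ((kdot α k s y : ℝ) : ℂ))) * φ y) -
      evanescentTail L α k (x - y) * φ y := by
    filter_upwards [ae_restrict_mem hS] with y hy
    rw [Gf_sub_eq (hsep y hy).1]
    ring
  rw [integral_congr_ae hsplit, integral_sub (hwave.const_mul _) htail, integral_const_mul,
    sub_sub_cancel_left, norm_neg]
  calc _ ≤ K * Real.exp (c * R) * Real.exp (-(c * (s * x 2))) * ∫ y, ‖φ y‖ ∂μ.restrict S :=
        norm_integral_mul_le_of_norm_le hφ htail_le_ae
    _ = _ := by ring

theorem singleLayer_farfield_general (L : ℝ) (hL : 0 < L) (α : R2) (k : ℝ) (hk : 0 < k)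
    (h2 : ∀ q : ℤ × ℤ, q ≠ 0 → k < ‖α + dualVec L q‖)
    (D : Set R3)
    (R : ℝ) (hDR : frontier D ⊆ {y : R3 | |y 2| ≤ R})
    (φ : R3 → ℂ) (hφ : Integrable φ ((μH[2] : Measure R3).restrict (frontier D))) :
    ∃ C > (0 : ℝ), ∃ c > (0 : ℝ),
      (∀ x : R3, R + 1 ≤ x 2 →
        ‖(∫ y, Gf L α k (x - y) * φ y ∂((μH[2] : Measure R3).restrict (frontier D))) -
            Complex.exp (Complex.I * ((kdot α k 1 x : ℝ) : ℂ)) /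
              (2 * Complex.I * ((kthree α k : ℝ) : ℂ) * ((L : ℝ) : ℂ) ^ 2) *
            ∫ y, Complex.exp (-(Complex.I * ((kdot α k 1 y : ℝ) : ℂ))) * φ y
              ∂((μH[2] : Measure R3).restrict (frontier D))‖ ≤
          C * Real.exp (-c * x 2)) ∧
      (∀ x : R3, x 2 ≤ -(R + 1) →
        ‖(∫ y, Gf L α k (x - y) * φ y ∂((μH[2] : Measure R3).restrict (frontier D))) -
            Complex.exp (Complex.I * ((kdot α k (-1) x : ℝ) : ℂ)) /
              (2 * Complex.I * ((kthree α k : ℝ) : ℂ) * ((L : ℝ) : ℂ) ^ 2) *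
            ∫ y, Complex.exp (-(Complex.I * ((kdot α k (-1) y : ℝ) : ℂ))) * φ y
              ∂((μH[2] : Measure R3).restrict (frontier D))‖ ≤
          C * Real.exp (c * x 2)) := by
  obtain ⟨c, hc, K, hK, hcont, hdecay⟩ := evanescentTail_decay hL hk.le h2
  have hfar := fun s hs x hx => norm_singleLayer_sub_planeWave_le hc.le hK hcont hdecay
    isClosed_frontier.measurableSet hDR hφ (s := s) hs (x := x) hx
  set C := K * Real.exp (c * R) * ∫ y, ‖φ y‖ ∂(μH[2] : Measure R3).restrict (frontier D)
  have hC : 0 ≤ C := by positivity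
  refine ⟨C + 1, by positivity, c, hc, fun x hx => ?_, fun x hx => ?_⟩
  · calc _ ≤ C * Real.exp (-(c * (1 * x 2))) := hfar 1 abs_one x (by rwa [one_mul])
      _ ≤ (C + 1) * Real.exp (-c * x 2) := by rw [one_mul, neg_mul]; gcongr; linarith
  · calc _ ≤ C * Real.exp (-(c * (-1 * x 2))) := hfar (-1) (by simp) x (by linarith)
      _ ≤ (C + 1) * Real.exp (c * x 2) := by rw [neg_one_mul, mul_neg, neg_neg]; gcongr; linarith

/-- Far-field behaviour of the quasiperiodic single layer potential in the first radiation
continuum (Lemma 4.1 of the paper): up to exponentially decaying terms, it behaves as a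
single outgoing plane wave in each of the directions `x₃ → ±∞`. -/
theorem singleLayer_farfield (L : ℝ) (hL : 0 < L) (α : R2) (k : ℝ) (hk : 0 < k)
    (h1 : ‖α‖ < k) (h2 : ∀ q : ℤ × ℤ, q ≠ 0 → k < ‖α + dualVec L q‖)
    (D : Set R3) (hD : Bornology.IsBounded D)
    (R : ℝ) (hR : 0 < R) (hDR : frontier D ⊆ {y : R3 | |y 2| ≤ R})
    (φ : R3 → ℂ) (hφ : Integrable φ ((μH[2] : Measure R3).restrict (frontier D))) :
    ∃ C > (0 : ℝ), ∃ c > (0 : ℝ),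
      (∀ x : R3, R + 1 ≤ x 2 →
        ‖(∫ y, Gf L α k (x - y) * φ y ∂((μH[2] : Measure R3).restrict (frontier D))) -
            Complex.exp (Complex.I * ((kdot α k 1 x : ℝ) : ℂ)) /
              (2 * Complex.I * ((kthree α k : ℝ) : ℂ) * ((L : ℝ) : ℂ) ^ 2) *
            ∫ y, Complex.exp (-(Complex.I * ((kdot α k 1 y : ℝ) : ℂ))) * φ y
              ∂((μH[2] : Measure R3).restrict (frontier D))‖ ≤
          C * Real.exp (-c * x 2)) ∧
      (∀ x : R3, x 2 ≤ -(R + 1) →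
        ‖(∫ y, Gf L α k (x - y) * φ y ∂((μH[2] : Measure R3).restrict (frontier D))) -
            Complex.exp (Complex.I * ((kdot α k (-1) x : ℝ) : ℂ)) /
              (2 * Complex.I * ((kthree α k : ℝ) : ℂ) * ((L : ℝ) : ℂ) ^ 2) *
            ∫ y, Complex.exp (-(Complex.I * ((kdot α k (-1) y : ℝ) : ℂ))) * φ y
              ∂((μH[2] : Measure R3).restrict (frontier D))‖ ≤
          C * Real.exp (c * x 2)) :=
  singleLayer_farfield_general L hL α k hk h2 D R hDR φ hφ
end
end

section
/- Fix L > 0 and 0 < k < 2π/L, and let G^{0,k} be the quasiperiodic Green's function at quasiperiodicity α = 0 defined by its spectral representation. Let 𝒫₁₂(x₁,x₂,x₃) = (−x₁,−x₂,x₃), let D ⊂ ℝ³ be a bounded set with 𝒫₁₂(∂D) = ∂D, let μ be the 2-dimensional Hausdorff measure restricted to ∂D, and let φ : ℝ³ → ℂ satisfy φ(𝒫₁₂ y) = −φ(y) for μ-almost every y. Let x ∈ ℝ³ be such that y ↦ G^{0,k}(x−y) φ(y) is μ-integrable and x₃ ≠ y₃ for μ-almost every y ∈ ∂D. Then ∫_{∂D}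 conj(G^{0,k}(x−y)) φ(y) dμ(y) = ∫_{∂D} G^{0,k}(x−y) φ(y) dμ(y). -/
/-!
At `α = 0` the evanescent modes of `q` and `-q` are complex conjugate, so conjugation only
affects the propagating mode, and `conj G - G = i cos (k₃ |x₃|) / (k₃ L²)` depends on `x₃` alone.
As `𝒫₁₂` is an isometry fixing `x₃` and preserving `∂D`, it preserves the Hausdorff measure on
`∂D` and this correction kernel, so the correction integrates to zero against the `𝒫₁₂`-odd `φ`.
-/

open MeasureTheory

noncomputable section

/-- The reflection `𝒫₁₂(x₁,x₂,x₃) = (−x₁,−x₂,x₃)`. -/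
def P12 (x : R3) : R3 := (EuclideanSpace.equiv (Fin 3) ℝ).symm ![-(x 0), -(x 1), x 2]

theorem MeasureTheory.MeasurePreserving.integral_eq_zero_of_comp_ae_eq_neg {X E : Type*}
    [MeasurableSpace X] [NormedAddCommGroup E] [NormedSpace ℝ E] {μ : Measure X} {T : X → X}
    (hT : MeasurePreserving T μ μ) (hTe : MeasurableEmbedding T) {f : X → E}
    (hf : ∀ᵐ y ∂μ, f (T y) = -f y) : ∫ y, f y ∂μ = 0 := by
  have : IsAddTorsionFree E := .of_isTorsionFree ℝ E
  rw [← self_eq_neg, ← integral_neg, ← integral_congr_ae hf, hT.integral_comp hTe]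

theorem IsometryEquiv.measurePreserving_hausdorffMeasure_restrict {X : Type*} [EMetricSpace X]
    [MeasurableSpace X] [BorelSpace X] (e : X ≃ᵢ X) (d : ℝ) {s : Set X} (hs : e '' s = s) :
    MeasurePreserving e (μH[d].restrict s) (μH[d].restrict s) := by
  have hpre : e ⁻¹' s = s := by
    nth_rw 1 [← hs]
    exact Set.preimage_image_eq s e.injective
  simpa only [hpre] using (e.measurePreserving_hausdorffMeasure d).restrict_preimage_emb
    e.toHomeomorph.measurableEmbedding s

theorem MeasureTheory.Integrable.conj_mul {X : Type*} [MeasurableSpace X] {μ : Measure X}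
    {G φ : X → ℂ} (hG : Measurable G) (h : Integrable (fun y => G y * φ y) μ) :
    Integrable (fun y => starRingEnd ℂ (G y) * φ y) μ := by
  -- `φ` alone need not be measurable, so measurability is transferred through `G * φ`.
  have hfactor : (fun y => starRingEnd ℂ (G y) * φ y) =
      fun y => (starRingEnd ℂ (G y) / G y) * (G y * φ y) := by
    funext y
    rcases eq_or_ne (G y) 0 with h0 | h0
    · simp [h0]
    · field_simp
  refine h.mono ?_ (ae_of_all _ fun y => by simp)
  rw [hfactor]
  exact ((Complex.continuous_conj.measurable.comp hG).div hG).aestronglyMeasurable.mul h.1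

lemma P12_apply_zero (x : R3) : P12 x 0 = -x 0 := rfl

lemma P12_apply_one (x : R3) : P12 x 1 = -x 1 := rfl

lemma P12_apply_two (x : R3) : P12 x 2 = x 2 := rfl

lemma P12_involutive : Function.Involutive P12 := by
  intro x
  ext i
  fin_cases i <;> simp [P12]

lemma isometry_P12 : Isometry P12 := by
  refine Isometry.of_dist_eq fun x y => ?_
  simp only [EuclideanSpace.dist_eq, Fin.sum_univ_three, P12_apply_zero, P12_apply_one,
    P12_apply_two, dist_neg_neg]

def isometryEquivP12 : R3 ≃ᵢ R3 :=
  { Function.Involutive.toPerm P12 P12_involutive with isometry_toFun := isometry_P12 }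

@[simp]
lemma coe_isometryEquivP12 : ⇑isometryEquivP12 = P12 := rfl

lemma measurable_Gf (L : ℝ) (α : R2) (k : ℝ) : Measurable (Gf L α k) := by
  unfold Gf evanescent
  fun_prop

lemma conj_evanescent_zero (L k : ℝ) (q : ℤ × ℤ) (z : R3) :
    starRingEnd ℂ (evanescent L 0 k q z) = evanescent L 0 k (-q) z := by
  simp only [evanescent, zero_add, map_div₀, map_mul, ← Complex.exp_conj, Complex.conj_I,
    Complex.conj_ofReal, dualVec_neg, norm_neg, PiLp.neg_apply]
  push_cast
  ring_nf

lemma conj_tsum_evanescent_zero (L k : ℝ) (z : R3) :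
    starRingEnd ℂ (∑' q : {q : ℤ × ℤ // q ≠ 0}, evanescent L 0 k q.1 z) =
      ∑' q : {q : ℤ × ℤ // q ≠ 0}, evanescent L 0 k q.1 z := by
  rw [← Complex.star_def, tsum_star]
  simp only [Complex.star_def, conj_evanescent_zero]
  exact ((Equiv.neg (ℤ × ℤ)).subtypeEquiv fun q => neg_ne_zero.symm).tsum_eq
    fun q => evanescent L 0 k q.1 z

lemma conj_exp_mul_I_div_sub (θ K : ℝ) :
    starRingEnd ℂ (Complex.exp (θ * Complex.I) / (2 * Complex.I * K)) -
        Complex.exp (θ * Complex.I) / (2 * Complex.I * K) =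
      Complex.I * Real.cos θ / K := by
  rcases eq_or_ne K 0 with rfl | hK
  · simp
  simp only [map_div₀, ← Complex.exp_conj, map_mul, map_ofNat, Complex.conj_I,
    Complex.conj_ofReal, Complex.ofReal_cos, Complex.cos]
  field_simp
  ring_nf
  rw [Complex.I_sq]
  ring

lemma conj_Gf_zero_sub (L k : ℝ) (z : R3) :
    starRingEnd ℂ (Gf L 0 k z) - Gf L 0 k z =
      Complex.I * Real.cos (kthree 0 k * |z 2|) / (kthree 0 k * L ^ 2 : ℝ) := by
  have := conj_exp_mul_I_div_sub (kthree 0 k * |z 2|) (kthree 0 k * L ^ 2)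
  simp only [Gf, map_sub, conj_tsum_evanescent_zero]
  push_cast at this ⊢
  simp only [PiLp.zero_apply, zero_mul, add_zero, Complex.ofReal_zero, mul_zero,
    Complex.exp_zero, one_mul]
  rw [← this]
  ring_nf

theorem conjKernel_singleLayer_general (L : ℝ) (k : ℝ)
    (D : Set R3) (hsym : P12 '' frontier D = frontier D)
    (φ : R3 → ℂ)
    (hodd : ∀ᵐ y ∂((μH[2] : Measure R3).restrict (frontier D)), φ (P12 y) = -φ y)
    (x : R3)
    (hint : Integrable (fun y => Gf L 0 k (x - y) * φ y)
      ((μH[2] : Measure R3).restrict (frontier D))) :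
    ∫ y, (starRingEnd ℂ) (Gf L 0 k (x - y)) * φ y
        ∂((μH[2] : Measure R3).restrict (frontier D)) =
      ∫ y, Gf L 0 k (x - y) * φ y ∂((μH[2] : Measure R3).restrict (frontier D)) := by
  have hG : Measurable fun y => Gf L 0 k (x - y) :=
    (measurable_Gf L 0 k).comp (measurable_const.sub measurable_id)
  rw [← sub_eq_zero, ← integral_sub (hint.conj_mul hG) hint]
  simp_rw [← sub_mul]
  refine (isometryEquivP12.measurePreserving_hausdorffMeasure_restrict 2 hsym
    ).integral_eq_zero_of_comp_ae_eq_neg isometryEquivP12.toHomeomorph.measurableEmbedding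
    (hodd.mono fun y hy => ?_)
  have hx₃ : (x - P12 y) 2 = (x - y) 2 := by simp [P12_apply_two]
  rw [coe_isometryEquivP12, conj_Gf_zero_sub, conj_Gf_zero_sub, hx₃, hy, mul_neg]

/-- For a `𝒫₁₂`-symmetric structure and a density `φ` that is odd under `𝒫₁₂`, the single
layer potential with conjugated kernel agrees with the single layer potential
(equation (5.1) of the paper). -/
theorem conjKernel_singleLayer (L : ℝ) (hL : 0 < L) (k : ℝ) (hk : 0 < k)
    (hk2 : k < 2 * Real.pi / L)
    (D : Set R3) (hD : Bornology.IsBounded D) (hsym : P12 '' frontier D = frontier D)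
    (φ : R3 → ℂ)
    (hodd : ∀ᵐ y ∂((μH[2] : Measure R3).restrict (frontier D)), φ (P12 y) = -φ y)
    (x : R3)
    (hint : Integrable (fun y => Gf L 0 k (x - y) * φ y)
      ((μH[2] : Measure R3).restrict (frontier D)))
    (hx : ∀ᵐ y ∂((μH[2] : Measure R3).restrict (frontier D)), x 2 ≠ y 2) :
    ∫ y, (starRingEnd ℂ) (Gf L 0 k (x - y)) * φ y
        ∂((μH[2] : Measure R3).restrict (frontier D)) =
      ∫ y, Gf L 0 k (x - y) * φ y ∂((μH[2] : Measure R3).restrict (frontier D)) :=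
  conjKernel_singleLayer_general L k D hsym φ hodd x hint

end
end
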